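/- Let (u_ε)_{ε∈(0,1]} be an S-moderate net of smooth functions on ℝ^n and suppose there exists N ∈ ℕ such that for every q ∈ ℕ, sup_{x∈ℝ^n}(1+|x|)^{-N}|u_ε(x)| = O(ε^q) as ε → 0. Then (u_ε) is S-negligible. -/

import Mathlib

open MeasureTheory
open scoped ENNReal

noncomputable section

/-- `P ε` holds for all sufficiently small `ε ∈ (0,1]`. -/
def EvSmall (P : ℝ → Prop) : Prop :=
  ∃ η : ℝ, 0 < η ∧ η ≤ 1 ∧ ∀ ε : ℝ, 0 < ε → ε ≤ η → P ε

/-- Partial derivative in the `i`-th coordinate direction. -/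
def pd {n : ℕ} (i : Fin n) (f : (Fin n → ℝ) → ℂ) : (Fin n → ℝ) → ℂ :=
  fun x => fderiv ℝ f x (Pi.single i 1)

/-- Multi-index partial derivative `∂^β`. -/
def pdm {n : ℕ} (β : Fin n → ℕ) (f : (Fin n → ℝ) → ℂ) : (Fin n → ℝ) → ℂ :=
  (List.finRange n).foldr (fun i g => (pd i)^[β i] g) f

/-- The monomial `x^α`. -/
def monom {n : ℕ} (α : Fin n → ℕ) (x : Fin n → ℝ) : ℝ := ∏ i, (x i) ^ (α i)

/-- A net of (smooth) functions on `ℝ^n` is S-moderate if for all multi-indices `α, β`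
there is `N` with `sup_x |x^α ∂^β u_ε(x)| = O(ε^{-N})` as `ε → 0`. -/
def SMod {n : ℕ} (u : ℝ → (Fin n → ℝ) → ℂ) : Prop :=
  ∀ α β : Fin n → ℕ, ∃ N : ℕ, ∃ C : ℝ, EvSmall fun ε =>
    ∀ x, |monom α x| * ‖pdm β (u ε) x‖ ≤ C * ε ^ (-(N : ℤ))

/-- A net of (smooth) functions on `ℝ^n` is S-negligible if for all multi-indices `α, β`
and every `q ∈ ℕ`, `sup_x |x^α ∂^β u_ε(x)| = O(ε^q)` as `ε → 0`. -/
def SNeg {n : ℕ} (u : ℝ → (Fin n → ℝ) → ℂ) : Prop :=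
  ∀ α β : Fin n → ℕ, ∀ q : ℕ, ∃ C : ℝ, EvSmall fun ε =>
    ∀ x, |monom α x| * ‖pdm β (u ε) x‖ ≤ C * ε ^ q

/-- A moderate net of points of `ℝ^n`: `|x_ε| = O(ε^{-N})` for some `N`. -/
def PtMod {n : ℕ} (x : ℝ → Fin n → ℝ) : Prop :=
  ∃ N : ℕ, ∃ C : ℝ, EvSmall fun ε => ‖x ε‖ ≤ C * ε ^ (-(N : ℤ))


lemma contDiff_pd {n : ℕ} (i : Fin n) {f : (Fin n → ℝ) → ℂ} (hf : ContDiff ℝ (⊤ : ℕ∞) f) :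
    ContDiff ℝ (⊤ : ℕ∞) (pd i f) := by
  have h1 : ContDiff ℝ (⊤ : ℕ∞) (fderiv ℝ f) := hf.fderiv_right (by simp)
  exact (ContinuousLinearMap.apply ℝ ℂ (Pi.single i 1 : Fin n → ℝ)).contDiff.comp h1

lemma pd_comm {n : ℕ} (i j : Fin n) {f : (Fin n → ℝ) → ℂ} (hf : ContDiff ℝ (⊤ : ℕ∞) f) :
    pd i (pd j f) = pd j (pd i f) := by
  funext x
  have hsymm : IsSymmSndFDerivAt ℝ f x := by
    apply ContDiffAt.isSymmSndFDerivAt hf.contDiffAt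
    rw [minSmoothness_of_isRCLikeNormedField]
    exact WithTop.coe_le_coe.2 le_top
  have key : ∀ k l : Fin n, pd k (pd l f) x
      = fderiv ℝ (fderiv ℝ f) x (Pi.single k 1) (Pi.single l 1) := by
    intro k l
    have h1 : ContDiff ℝ (⊤ : ℕ∞) (fderiv ℝ f) := hf.fderiv_right (by simp)
    have : pd l f = fun y => (ContinuousLinearMap.apply ℝ ℂ (Pi.single l 1 : Fin n → ℝ))
        (fderiv ℝ f y) := rfl
    rw [pd, this]
    have hd : DifferentiableAt ℝ (fderiv ℝ f) x := (h1.differentiable (by simp)).differentiableAt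
    rw [show (fun y => (ContinuousLinearMap.apply ℝ ℂ (Pi.single l 1 : Fin n → ℝ))
        (fderiv ℝ f y)) = (ContinuousLinearMap.apply ℝ ℂ (Pi.single l 1 : Fin n → ℝ)) ∘
        (fderiv ℝ f) from rfl,
      ((ContinuousLinearMap.apply ℝ ℂ (Pi.single l 1 : Fin n → ℝ)).hasFDerivAt.comp x
        hd.hasFDerivAt).fderiv]
    simp
  rw [key, key, hsymm.eq]

lemma contDiff_pd_iter {n : ℕ} (i : Fin n) (k : ℕ) {f : (Fin n → ℝ) → ℂ}
    (hf : ContDiff ℝ (⊤ : ℕ∞) f) : ContDiff ℝ (⊤ : ℕ∞) ((pd i)^[k] f) := by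
  induction k with
  | zero => simpa using hf
  | succ k ih => rw [Function.iterate_succ_apply']; exact contDiff_pd i ih

lemma pd_iter_comm {n : ℕ} (i j : Fin n) (k : ℕ) {f : (Fin n → ℝ) → ℂ}
    (hf : ContDiff ℝ (⊤ : ℕ∞) f) : pd i ((pd j)^[k] f) = (pd j)^[k] (pd i f) := by
  induction k with
  | zero => rfl
  | succ k ih =>
      rw [Function.iterate_succ_apply', Function.iterate_succ_apply',
        pd_comm i j (contDiff_pd_iter j k hf), ih]

def pdmL {n : ℕ} (l : List (Fin n)) (β : Fin n → ℕ) (f : (Fin n → ℝ) → ℂ) :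
    (Fin n → ℝ) → ℂ :=
  l.foldr (fun i g => (pd i)^[β i] g) f

lemma pdmL_cons {n : ℕ} (j : Fin n) (t : List (Fin n)) (β : Fin n → ℕ)
    (f : (Fin n → ℝ) → ℂ) : pdmL (j :: t) β f = (pd j)^[β j] (pdmL t β f) := rfl

lemma pdm_eq_pdmL {n : ℕ} (β : Fin n → ℕ) (f : (Fin n → ℝ) → ℂ) :
    pdm β f = pdmL (List.finRange n) β f := rfl

lemma contDiff_pdmL {n : ℕ} (l : List (Fin n)) (β : Fin n → ℕ) {f : (Fin n → ℝ) → ℂ}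
    (hf : ContDiff ℝ (⊤ : ℕ∞) f) : ContDiff ℝ (⊤ : ℕ∞) (pdmL l β f) := by
  induction l with
  | nil => exact hf
  | cons j t ih => exact contDiff_pd_iter j (β j) ih

lemma pd_pdmL_comm {n : ℕ} (i : Fin n) (l : List (Fin n)) (β : Fin n → ℕ)
    {f : (Fin n → ℝ) → ℂ} (hf : ContDiff ℝ (⊤ : ℕ∞) f) :
    pd i (pdmL l β f) = pdmL l β (pd i f) := by
  induction l with
  | nil => rfl
  | cons j t ih =>
      rw [pdmL_cons, pdmL_cons,pd_iter_comm i j (β j) (contDiff_pdmL t β hf), ih]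

lemma pdmL_congr {n : ℕ} (l : List (Fin n)) {β γ : Fin n → ℕ}
    (h : ∀ j ∈ l, β j = γ j) (f : (Fin n → ℝ) → ℂ) : pdmL l β f = pdmL l γ f := by
  induction l with
  | nil => rfl
  | cons j t ih =>
      rw [pdmL_cons, pdmL_cons,h j List.mem_cons_self, ih fun a ha => h a (List.mem_cons_of_mem j ha)]

lemma pdmL_add_single {n : ℕ} (i : Fin n) (l : List (Fin n)) (hl : l.Nodup)
    (hi : i ∈ l) (β : Fin n → ℕ) {f : (Fin n → ℝ) → ℂ} (hf : ContDiff ℝ (⊤ : ℕ∞) f) :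
    pdmL l (β + Pi.single i 1) f = pdmL l β (pd i f) := by
  induction l with
  | nil => simp at hi
  | cons j t ih =>
      rcases List.nodup_cons.1 hl with ⟨hjt, ht⟩
      by_cases hji : j = i
      · subst hji
        rw [pdmL_cons, pdmL_cons]
        have h1 : pdmL t (β + Pi.single j 1) f = pdmL t β f :=
          pdmL_congr t (fun a ha => by
            have : a ≠ j := fun h => hjt (h ▸ ha)
            simp [Pi.single_apply, this]) f
        rw [h1]
        have h2 : (β + Pi.single j 1 : Fin n → ℕ) j = β j + 1 := by simp
        rw [h2, Function.iterate_succ_apply, pd_pdmL_comm j t β hf]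
      · have hit : i ∈ t := by
          rcases List.mem_cons.1 hi with h | h
          · exact absurd h.symm hji
          · exact h
        rw [pdmL_cons, pdmL_cons]
        have h2 : (β + Pi.single i 1 : Fin n → ℕ) j = β j := by simp [Pi.single_apply, hji]
        rw [h2, ih ht hit]

lemma pdm_add_single {n : ℕ} (i : Fin n) (β : Fin n → ℕ) {f : (Fin n → ℝ) → ℂ}
    (hf : ContDiff ℝ (⊤ : ℕ∞) f) : pdm (β + Pi.single i 1) f = pdm β (pd i f) :=
  pdmL_add_single i _ (List.nodup_finRange n) (List.mem_finRange i) β hf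

lemma contDiff_pdm {n : ℕ} (β : Fin n → ℕ) {f : (Fin n → ℝ) → ℂ}
    (hf : ContDiff ℝ (⊤ : ℕ∞) f) : ContDiff ℝ (⊤ : ℕ∞) (pdm β f) := contDiff_pdmL _ β hf

lemma multiindex_induction {n : ℕ} (P : (Fin n → ℕ) → Prop) (h0 : P 0)
    (hstep : ∀ β (i : Fin n), P β → P (β + Pi.single i 1)) : ∀ β, P β := by
  suffices h : ∀ m : ℕ, ∀ β : Fin n → ℕ, (∑ i, β i) = m → P β by
    exact fun β => h _ β rfl
  intro m
  induction m with
  | zero =>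
      intro β hβ
      have : β = 0 := funext fun i => by
        have := (Finset.sum_eq_zero_iff.mp hβ) i (Finset.mem_univ i)
        simpa using this
      rw [this]; exact h0
  | succ m ih =>
      intro β hβ
      have hne : ∃ i, β i ≠ 0 := by
        by_contra hc
        push_neg at hc
        simp only [hc, Finset.sum_const_zero] at hβ
        exact Nat.succ_ne_zero m hβ.symm
      obtain ⟨i, hi⟩ := hne
      set γ : Fin n → ℕ := Function.update β i (β i - 1) with hγ
      have hdecomp : β = γ + Pi.single i 1 := by
        funext j
        by_cases hj : j = i
        · subst hj
          simp [hγ, Function.update_self, Nat.sub_add_cancel (Nat.one_le_iff_ne_zero.2 hi)]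
        · simp [hγ, Function.update_of_ne hj, Pi.single_apply, hj]
      have hsum : (∑ j, γ j) = m := by
        have h1 : (∑ j, β j) = (∑ j, γ j) + ∑ j, (Pi.single i 1 : Fin n → ℕ) j := by
          rw [← Finset.sum_add_distrib]
          exact Finset.sum_congr rfl fun j _ => by rw [hdecomp]; rfl
        rw [Finset.sum_pi_single'] at h1
        simp only [Finset.mem_univ, if_true] at h1
        omega
      rw [hdecomp]
      exact hstep γ i (ih γ hsum)

lemma norm_single_le {n : ℕ} (i : Fin n) : ‖(Pi.single i 1 : Fin n → ℝ)‖ ≤ 1 := by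
  apply pi_norm_le_iff_of_nonneg zero_le_one |>.2
  intro j
  rcases eq_or_ne j i with h | h
  · subst h; simp
  · simp [Pi.single_apply, h]

lemma hasDerivAt_line {n : ℕ} {f : (Fin n → ℝ) → ℂ} (hf : ContDiff ℝ (⊤ : ℕ∞) f)
    (x : Fin n → ℝ) (i : Fin n) (t : ℝ) :
    HasDerivAt (fun s : ℝ => f (x + s • (Pi.single i 1 : Fin n → ℝ)))
      (pd i f (x + t • (Pi.single i 1 : Fin n → ℝ))) t := by
  have hline : HasDerivAt (fun s : ℝ => x + s • (Pi.single i 1 : Fin n → ℝ))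
      (Pi.single i 1) t := by
    simpa using ((hasDerivAt_id t).smul_const (Pi.single i 1 : Fin n → ℝ)).const_add x
  have hfd : HasFDerivAt f (fderiv ℝ f (x + t • (Pi.single i 1 : Fin n → ℝ)))
      (x + t • (Pi.single i 1 : Fin n → ℝ)) :=
    (hf.differentiable (by simp) _).hasFDerivAt
  exact hfd.comp_hasDerivAt t hline

lemma landau {n : ℕ} {g : (Fin n → ℝ) → ℂ} (hg : ContDiff ℝ (⊤ : ℕ∞) g) (i : Fin n)
    (M : ℕ) (A B : ℝ) (hA : ∀ y, (1 + ‖y‖) ^ M * ‖g y‖ ≤ A)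
    (hB : ∀ y, (1 + ‖y‖) ^ M * ‖pd i (pd i g) y‖ ≤ B)
    {h : ℝ} (h0 : 0 < h) (h1 : h ≤ 1) (x : Fin n → ℝ) :
    (1 + ‖x‖) ^ M * ‖pd i g x‖ ≤ 2 ^ M * (2 * A / h + h * B) := by
  set e : Fin n → ℝ := Pi.single i 1 with he
  set W : ℝ := (1 + ‖x‖) ^ M with hW
  have hxnn : (0:ℝ) ≤ ‖x‖ := norm_nonneg x
  have hWpos : 0 < W := pow_pos (by linarith) M
  have hA0 : 0 ≤ A := le_trans (mul_nonneg (pow_nonneg (by linarith [norm_nonneg x]) M)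
    (norm_nonneg _)) (hA x)
  have hB0 : 0 ≤ B := le_trans (mul_nonneg (pow_nonneg (by linarith [norm_nonneg x]) M)
    (norm_nonneg _)) (hB x)
  -- comparison of weights along the segment
  have hcomp : ∀ t ∈ Set.Icc (0:ℝ) h, W ≤ 2 ^ M * (1 + ‖x + t • e‖) ^ M := by
    intro t ht
    have hte : ‖t • e‖ ≤ 1 := by
      rw [norm_smul]
      calc ‖t‖ * ‖e‖ ≤ 1 * 1 := by
            apply mul_le_mul _ (norm_single_le i) (norm_nonneg _) zero_le_one
            rw [Real.norm_eq_abs, abs_of_nonneg ht.1]; linarith [ht.2]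
        _ = 1 := one_mul 1
    have h2 : ‖x‖ ≤ ‖x + t • e‖ + 1 := by
      calc ‖x‖ = ‖x + t • e + (-(t • e))‖ := by rw [add_neg_cancel_right]
        _ ≤ ‖x + t • e‖ + ‖-(t • e)‖ := norm_add_le _ _
        _ = ‖x + t • e‖ + ‖t • e‖ := by rw [norm_neg]
        _ ≤ ‖x + t • e‖ + 1 := by linarith
    calc W = (1 + ‖x‖) ^ M := rfl
      _ ≤ (2 * (1 + ‖x + t • e‖)) ^ M := by
          apply pow_le_pow_left₀ (by linarith)
          linarith [norm_nonneg (x + t • e)]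
      _ = 2 ^ M * (1 + ‖x + t • e‖) ^ M := mul_pow 2 _ M
  have hbound : ∀ (C : ℝ) (f : (Fin n → ℝ) → ℂ), 0 ≤ C →
      (∀ y, (1 + ‖y‖) ^ M * ‖f y‖ ≤ C) →
      ∀ t ∈ Set.Icc (0:ℝ) h, ‖f (x + t • e)‖ ≤ 2 ^ M * C / W := by
    intro C f hC hf t ht
    have h1' : (1 + ‖x + t • e‖) ^ M * ‖f (x + t • e)‖ ≤ C := hf _
    have h2' : W ≤ 2 ^ M * (1 + ‖x + t • e‖) ^ M := hcomp t ht
    have hppos : (0:ℝ) < (1 + ‖x + t • e‖) ^ M :=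
      pow_pos (by linarith [norm_nonneg (x + t • e)]) M
    rw [le_div_iff₀ hWpos]
    calc ‖f (x + t • e)‖ * W ≤ ‖f (x + t • e)‖ * (2 ^ M * (1 + ‖x + t • e‖) ^ M) := by
          apply mul_le_mul_of_nonneg_left h2' (norm_nonneg _)
      _ = 2 ^ M * ((1 + ‖x + t • e‖) ^ M * ‖f (x + t • e)‖) := by ring
      _ ≤ 2 ^ M * C := by
          apply mul_le_mul_of_nonneg_left h1' (by positivity)
  -- step 1 : variation of pd i g along the segment
  have hstep1 : ∀ t ∈ Set.Icc (0:ℝ) h,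
      ‖pd i g (x + t • e) - pd i g x‖ ≤ (2 ^ M * B / W) * t := by
    have hd : ∀ t ∈ Set.Icc (0:ℝ) h, HasDerivWithinAt (fun s : ℝ => pd i g (x + s • e))
        (pd i (pd i g) (x + t • e)) (Set.Icc 0 h) t := fun t _ =>
      (hasDerivAt_line (contDiff_pd i hg) x i t).hasDerivWithinAt
    have hb : ∀ t ∈ Set.Ico (0:ℝ) h, ‖pd i (pd i g) (x + t • e)‖ ≤ 2 ^ M * B / W :=
      fun t ht => hbound B (pd i (pd i g)) hB0 hB t ⟨ht.1, le_of_lt ht.2⟩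
    intro t ht
    have := norm_image_sub_le_of_norm_deriv_le_segment' hd hb t ht
    simpa using this
  -- step 2 : Taylor-type bound
  have hstep2 : ‖(g (x + h • e) - h • pd i g x) - g x‖ ≤ (2 ^ M * B / W * h) * h := by
    have hd : ∀ t ∈ Set.Icc (0:ℝ) h, HasDerivWithinAt
        (fun s : ℝ => g (x + s • e) - s • pd i g x)
        (pd i g (x + t • e) - pd i g x) (Set.Icc 0 h) t := by
      intro t _
      have := ((hasDerivAt_line hg x i t).sub
        ((hasDerivAt_id t).smul_const (pd i g x))).hasDerivWithinAt
        (s := Set.Icc 0 h)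
      rw [one_smul] at this; exact this
    have hb : ∀ t ∈ Set.Ico (0:ℝ) h, ‖pd i g (x + t • e) - pd i g x‖ ≤ 2 ^ M * B / W * h := by
      intro t ht
      calc ‖pd i g (x + t • e) - pd i g x‖ ≤ (2 ^ M * B / W) * t :=
            hstep1 t ⟨ht.1, le_of_lt ht.2⟩
        _ ≤ 2 ^ M * B / W * h := by
            apply mul_le_mul_of_nonneg_left (le_of_lt ht.2) (by positivity)
    have := norm_image_sub_le_of_norm_deriv_le_segment' hd hb h
      ⟨le_of_lt h0, le_refl h⟩
    simpa using this
  -- assemble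
  have hg1 : ‖g (x + h • e)‖ ≤ 2 ^ M * A / W :=
    hbound A g hA0 hA h ⟨le_of_lt h0, le_refl h⟩
  have hg2 : ‖g x‖ ≤ 2 ^ M * A / W := by
    have := hbound A g hA0 hA 0 ⟨le_refl 0, le_of_lt h0⟩
    simpa using this
  have hmain : h * ‖pd i g x‖ ≤ 2 ^ M * (2 * A + h * h * B) / W := by
    have h3 : ‖h • pd i g x‖ ≤ ‖g (x + h • e)‖ + ‖g x‖ + 2 ^ M * B / W * h * h := by
      have : h • pd i g x = g (x + h • e) - ((g (x + h • e) - h • pd i g x) - g x) - g x := by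
        module
      rw [this]
      calc ‖g (x + h • e) - ((g (x + h • e) - h • pd i g x) - g x) - g x‖
          ≤ ‖g (x + h • e) - ((g (x + h • e) - h • pd i g x) - g x)‖ + ‖g x‖ :=
            norm_sub_le _ _
        _ ≤ ‖g (x + h • e)‖ + ‖(g (x + h • e) - h • pd i g x) - g x‖ + ‖g x‖ := by
            linarith [norm_sub_le (g (x + h • e)) ((g (x + h • e) - h • pd i g x) - g x)]
        _ ≤ ‖g (x + h • e)‖ + ‖g x‖ + 2 ^ M * B / W * h * h := by
            linarith [hstep2]
    rw [norm_smul, Real.norm_eq_abs, abs_of_pos h0] at h3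
    calc h * ‖pd i g x‖ ≤ 2 ^ M * A / W + 2 ^ M * A / W + 2 ^ M * B / W * h * h := by
          linarith [hg1, hg2]
      _ = 2 ^ M * (2 * A + h * h * B) / W := by field_simp; ring
  have : W * (h * ‖pd i g x‖) ≤ W * (2 ^ M * (2 * A + h * h * B) / W) :=
    mul_le_mul_of_nonneg_left hmain (le_of_lt hWpos)
  rw [mul_div_cancel₀ _ (ne_of_gt hWpos)] at this
  rw [show W * (h * ‖pd i g x‖) = h * (W * ‖pd i g x‖) by ring] at this
  have hfin : W * ‖pd i g x‖ ≤ 2 ^ M * (2 * A + h * h * B) / h := by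
    rw [le_div_iff₀ h0]
    linarith [this]
  calc W * ‖pd i g x‖ ≤ 2 ^ M * (2 * A + h * h * B) / h := hfin
    _ = 2 ^ M * (2 * A / h + h * B) := by field_simp

lemma evSmall_family {ι : Type*} [Fintype ι] (Q : ι → ℝ → Prop)
    (h : ∀ i, EvSmall (Q i)) : EvSmall (fun ε => ∀ i, Q i ε) := by
  choose η hη0 hη1 hQ using h
  rcases isEmpty_or_nonempty ι with hι | hι
  · exact ⟨1, one_pos, le_refl 1, fun ε _ _ i => (IsEmpty.elim hι i)⟩
  · refine ⟨Finset.univ.inf' Finset.univ_nonempty η, ?_, ?_, ?_⟩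
    · rw [Finset.lt_inf'_iff]
      exact fun i _ => hη0 i
    · obtain ⟨i⟩ := hι
      exact le_trans (Finset.inf'_le η (Finset.mem_univ i)) (hη1 i)
    · intro ε hε0 hεη i
      exact hQ i ε hε0 (le_trans hεη (Finset.inf'_le η (Finset.mem_univ i)))

lemma evSmall_and {P Q : ℝ → Prop} (hP : EvSmall P) (hQ : EvSmall Q) :
    EvSmall fun ε => P ε ∧ Q ε := by
  obtain ⟨η₁, h10, h11, hP1⟩ := hP
  obtain ⟨η₂, h20, h21, hQ2⟩ := hQ
  exact ⟨min η₁ η₂, lt_min h10 h20, le_trans (min_le_left _ _) h11,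
    fun ε hε0 hεη => ⟨hP1 ε hε0 (le_trans hεη (min_le_left _ _)),
      hQ2 ε hε0 (le_trans hεη (min_le_right _ _))⟩⟩

lemma weight_le_sum {n M : ℕ} (x : Fin n → ℝ) :
    (1 + ‖x‖) ^ M ≤ 2 ^ M * (1 + ∑ i, |x i| ^ M) := by
  have hsum : (0:ℝ) ≤ ∑ i, |x i| ^ M :=
    Finset.sum_nonneg fun i _ => pow_nonneg (abs_nonneg _) M
  rcases le_or_gt ‖x‖ 1 with hx | hx
  · calc (1 + ‖x‖) ^ M ≤ 2 ^ M := pow_le_pow_left₀ (by positivity) (by linarith) M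
      _ ≤ 2 ^ M * (1 + ∑ i, |x i| ^ M) := by nlinarith [pow_pos (zero_lt_two (α := ℝ)) M]
  · have hne : Nonempty (Fin n) := by
      by_contra hempty
      rw [not_nonempty_iff] at hempty
      have : x = 0 := funext fun i => (IsEmpty.elim hempty i)
      rw [this, norm_zero] at hx
      linarith
    obtain ⟨i, _, hi⟩ := Finset.exists_mem_eq_sup (Finset.univ : Finset (Fin n))
      Finset.univ_nonempty (fun i => ‖x i‖₊)
    have hnorm : ‖x‖ = |x i| := by
      rw [Pi.norm_def, hi]
      simp [Real.norm_eq_abs]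
    have h1 : ‖x‖ ^ M ≤ ∑ j, |x j| ^ M := by
      rw [hnorm]
      exact Finset.single_le_sum (f := fun j => |x j| ^ M)
        (fun j _ => pow_nonneg (abs_nonneg _) M) (Finset.mem_univ i)
    calc (1 + ‖x‖) ^ M ≤ (2 * ‖x‖) ^ M := pow_le_pow_left₀ (by positivity) (by linarith) M
      _ = 2 ^ M * ‖x‖ ^ M := mul_pow 2 _ M
      _ ≤ 2 ^ M * (1 + ∑ j, |x j| ^ M) := by
          apply mul_le_mul_of_nonneg_left _ (by positivity)
          linarith

lemma abs_monom_single {n : ℕ} (i : Fin n) (M : ℕ) (x : Fin n → ℝ) :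
    |monom (Pi.single i M) x| = |x i| ^ M := by
  rw [monom]
  rw [Finset.prod_eq_single i (fun j _ hj => by simp [Pi.single_apply, hj])
    (fun h => absurd (Finset.mem_univ i) h)]
  simp [abs_pow]

lemma abs_monom_zero {n : ℕ} (x : Fin n → ℝ) : |monom (0 : Fin n → ℕ) x| = 1 := by
  simp [monom]

lemma mod_weighted {n : ℕ} {u : ℝ → (Fin n → ℝ) → ℂ} (hmod : SMod u)
    (β : Fin n → ℕ) (M : ℕ) :
    ∃ K : ℕ, ∃ C : ℝ, 0 ≤ C ∧ EvSmall fun ε => ∀ x,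
      (1 + ‖x‖) ^ M * ‖pdm β (u ε) x‖ ≤ C * ε ^ (-(K : ℤ)) := by
  set α : Option (Fin n) → (Fin n → ℕ) := fun o => o.elim 0 (fun i => Pi.single i M) with hα
  have h := fun o => hmod (α o) β
  choose K C hEv using h
  set K₀ : ℕ := Finset.univ.sup K with hK₀
  set C₀ : ℝ := ∑ o : Option (Fin n), max (C o) 0 with hC₀
  have hC₀0 : 0 ≤ C₀ := Finset.sum_nonneg fun o _ => le_max_right _ _
  obtain ⟨η, hη0, hη1, hP⟩ := evSmall_family _ hEv
  refine ⟨K₀, 2 ^ M * C₀, by positivity, η, hη0, hη1, fun ε hε0 hεη x => ?_⟩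
  have hεz : ∀ o : Option (Fin n), ε ^ (-(K o : ℤ)) ≤ ε ^ (-(K₀ : ℤ)) := by
    intro o
    apply zpow_le_zpow_right_of_le_one₀ hε0 (le_trans hεη hη1)
    simp only [neg_le_neg_iff, Nat.cast_le]
    exact Finset.le_sup (Finset.mem_univ o)
  have hterm : ∀ o : Option (Fin n),
      |monom (α o) x| * ‖pdm β (u ε) x‖ ≤ max (C o) 0 * ε ^ (-(K₀ : ℤ)) := by
    intro o
    calc |monom (α o) x| * ‖pdm β (u ε) x‖ ≤ C o * ε ^ (-(K o : ℤ)) := hP ε hε0 hεη o x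
      _ ≤ max (C o) 0 * ε ^ (-(K o : ℤ)) := by
          apply mul_le_mul_of_nonneg_right (le_max_left _ _) (le_of_lt (zpow_pos hε0 _))
      _ ≤ max (C o) 0 * ε ^ (-(K₀ : ℤ)) := by
          apply mul_le_mul_of_nonneg_left (hεz o) (le_max_right _ _)
  have hw : (1 + ‖x‖) ^ M ≤ 2 ^ M * ∑ o : Option (Fin n), |monom (α o) x| := by
    have : ∑ o : Option (Fin n), |monom (α o) x| = 1 + ∑ i, |x i| ^ M := by
      rw [Fintype.sum_option]
      simp only [hα, Option.elim, abs_monom_zero]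
      congr 1
      exact Finset.sum_congr rfl fun i _ => abs_monom_single i M x
    rw [this]
    exact weight_le_sum x
  calc (1 + ‖x‖) ^ M * ‖pdm β (u ε) x‖
      ≤ (2 ^ M * ∑ o : Option (Fin n), |monom (α o) x|) * ‖pdm β (u ε) x‖ :=
        mul_le_mul_of_nonneg_right hw (norm_nonneg _)
    _ = 2 ^ M * ∑ o : Option (Fin n), |monom (α o) x| * ‖pdm β (u ε) x‖ := by
        rw [mul_assoc, Finset.sum_mul]
    _ ≤ 2 ^ M * ∑ o : Option (Fin n), max (C o) 0 * ε ^ (-(K₀ : ℤ)) := by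
        apply mul_le_mul_of_nonneg_left (Finset.sum_le_sum fun o _ => hterm o) (by positivity)
    _ = 2 ^ M * C₀ * ε ^ (-(K₀ : ℤ)) := by
        rw [← Finset.sum_mul, ← hC₀, mul_assoc]

lemma pdmL_zero {n : ℕ} (l : List (Fin n)) (f : (Fin n → ℝ) → ℂ) :
    pdmL l (0 : Fin n → ℕ) f = f := by
  induction l with
  | nil => rfl
  | cons j t ih => rw [pdmL_cons]; simpa using ih

lemma pdm_zero {n : ℕ} (f : (Fin n → ℝ) → ℂ) : pdm (0 : Fin n → ℕ) f = f :=
  pdmL_zero _ f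

lemma neg_weighted {n : ℕ} {u : ℝ → (Fin n → ℝ) → ℂ}
    (hsmooth : ∀ ε ∈ Set.Ioc (0:ℝ) 1, ContDiff ℝ (⊤ : ℕ∞) (u ε)) (hmod : SMod u)
    (hdec : ∃ N : ℕ, ∀ q : ℕ, ∃ C : ℝ, EvSmall fun ε => ∀ x,
      ((1 + ‖x‖) ^ N)⁻¹ * ‖u ε x‖ ≤ C * ε ^ q) :
    ∀ β : Fin n → ℕ, ∀ M q : ℕ, ∃ C : ℝ, 0 ≤ C ∧ EvSmall fun ε => ∀ x,
      (1 + ‖x‖) ^ M * ‖pdm β (u ε) x‖ ≤ C * ε ^ q := by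
  obtain ⟨N, hdecN⟩ := hdec
  apply multiindex_induction
  · -- base case β = 0
    intro M q
    obtain ⟨K, C₁, hC₁0, hEv₁⟩ := mod_weighted hmod 0 (2*M+N)
    obtain ⟨C₂, hEv₂⟩ := hdecN (2*q+K)
    obtain ⟨η, hη0, hη1, hP⟩ := evSmall_and hEv₁ hEv₂
    refine ⟨Real.sqrt (C₁ * max C₂ 0), Real.sqrt_nonneg _, η, hη0, hη1, fun ε hε0 hεη x => ?_⟩
    obtain ⟨h₁, h₂⟩ := hP ε hε0 hεη
    rw [pdm_zero] at h₁
    rw [pdm_zero]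
    have hxpos : (0:ℝ) < 1 + ‖x‖ := by linarith [norm_nonneg x]
    have ha0 : 0 ≤ (1 + ‖x‖) ^ M * ‖u ε x‖ := by positivity
    have hkey : ((1 + ‖x‖) ^ M * ‖u ε x‖) ^ 2 ≤ C₁ * max C₂ 0 * (ε ^ q) ^ 2 := by
      have hprod : ((1 + ‖x‖) ^ M * ‖u ε x‖) ^ 2
          = ((1 + ‖x‖) ^ (2*M+N) * ‖u ε x‖) * (((1 + ‖x‖) ^ N)⁻¹ * ‖u ε x‖) := by
        rw [pow_add]
        field_simp
        ring
      have h2' : ((1 + ‖x‖) ^ N)⁻¹ * ‖u ε x‖ ≤ max C₂ 0 * ε ^ (2*q+K) := by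
        calc ((1 + ‖x‖) ^ N)⁻¹ * ‖u ε x‖ ≤ C₂ * ε ^ (2*q+K) := h₂ x
          _ ≤ max C₂ 0 * ε ^ (2*q+K) :=
            mul_le_mul_of_nonneg_right (le_max_left _ _) (by positivity)
      have hcomb : ((1 + ‖x‖) ^ (2*M+N) * ‖u ε x‖) * (((1 + ‖x‖) ^ N)⁻¹ * ‖u ε x‖)
          ≤ (C₁ * ε ^ (-(K:ℤ))) * (max C₂ 0 * ε ^ (2*q+K)) := by
        apply mul_le_mul (h₁ x) h2' (by positivity)
        calc (0:ℝ) ≤ (1 + ‖x‖) ^ (2*M+N) * ‖u ε x‖ := by positivity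
          _ ≤ C₁ * ε ^ (-(K:ℤ)) := h₁ x
      have heq : (C₁ * ε ^ (-(K:ℤ))) * (max C₂ 0 * ε ^ (2*q+K))
          = C₁ * max C₂ 0 * (ε ^ q) ^ 2 := by
        rw [zpow_neg, zpow_natCast]
        field_simp
        ring
      rw [hprod]
      rw [heq] at hcomb
      exact hcomb
    calc (1 + ‖x‖) ^ M * ‖u ε x‖ ≤ Real.sqrt (C₁ * max C₂ 0 * (ε ^ q) ^ 2) :=
        Real.le_sqrt_of_sq_le hkey
      _ = Real.sqrt (C₁ * max C₂ 0) * ε ^ q := by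
        rw [Real.sqrt_mul (by positivity), Real.sqrt_sq (by positivity)]
  · -- inductive step
    intro β i IH M q
    obtain ⟨K, C₁, hC₁0, hEv₁⟩ := mod_weighted hmod (β + Pi.single i 1 + Pi.single i 1) M
    obtain ⟨C₂, hC₂0, hEv₂⟩ := IH M (2*q+K)
    obtain ⟨η, hη0, hη1, hP⟩ := evSmall_and hEv₁ hEv₂
    refine ⟨2 ^ M * (2 * C₂ + C₁), by positivity, η, hη0, hη1, fun ε hε0 hεη x => ?_⟩
    obtain ⟨h₁, h₂⟩ := hP ε hε0 hεη
    have hsm : ContDiff ℝ (⊤ : ℕ∞) (u ε) := hsmooth ε ⟨hε0, le_trans hεη hη1⟩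
    have hgsm : ContDiff ℝ (⊤ : ℕ∞) (pdm β (u ε)) := contDiff_pdm β hsm
    have hid1 : pdm (β + Pi.single i 1) (u ε) = pd i (pdm β (u ε)) := by
      rw [pdm_add_single i β hsm, pdm_eq_pdmL, pdm_eq_pdmL]
      exact (pd_pdmL_comm i _ β hsm).symm
    have hid2 : pd i (pd i (pdm β (u ε))) = pdm (β + Pi.single i 1 + Pi.single i 1) (u ε) := by
      rw [pdm_add_single i _ hsm, pdm_add_single i β (contDiff_pd i hsm)]
      rw [pdm_eq_pdmL, pdm_eq_pdmL]
      rw [pd_pdmL_comm i _ β hsm, pd_pdmL_comm i _ β (contDiff_pd i hsm)]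
    have hhpos : (0:ℝ) < ε ^ (q+K) := pow_pos hε0 _
    have hh1 : ε ^ (q+K) ≤ 1 := pow_le_one₀ (le_of_lt hε0) (le_trans hεη hη1)
    have hL := landau hgsm i M (C₂ * ε ^ (2*q+K)) (C₁ * ε ^ (-(K:ℤ)))
      (fun y => h₂ y) (fun y => by rw [hid2]; exact h₁ y) hhpos hh1 x
    rw [hid1]
    have heq : 2 ^ M * (2 * (C₂ * ε ^ (2*q+K)) / ε ^ (q+K) + ε ^ (q+K) * (C₁ * ε ^ (-(K:ℤ))))
        = 2 ^ M * (2 * C₂ + C₁) * ε ^ q := by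
      rw [zpow_neg, zpow_natCast]
      field_simp
      ring
    rw [heq] at hL
    exact hL

theorem stmt13' {n : ℕ} (u : ℝ → (Fin n → ℝ) → ℂ)
    (hsmooth : ∀ ε ∈ Set.Ioc (0 : ℝ) 1, ContDiff ℝ (⊤ : ℕ∞) (u ε))
    (hmod : SMod u)
    (hdec : ∃ N : ℕ, ∀ q : ℕ, ∃ C : ℝ, EvSmall fun ε => ∀ x,
      ((1 + ‖x‖) ^ N)⁻¹ * ‖u ε x‖ ≤ C * ε ^ q) :
    ∀ α β : Fin n → ℕ, ∀ q : ℕ, ∃ C : ℝ, EvSmall fun ε =>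
      ∀ x, |monom α x| * ‖pdm β (u ε) x‖ ≤ C * ε ^ q := by
  intro α β q
  obtain ⟨C, hC0, ⟨η, hη0, hη1, hP⟩⟩ := neg_weighted hsmooth hmod hdec β (∑ i, α i) q
  refine ⟨C, η, hη0, hη1, fun ε hε0 hεη x => ?_⟩
  have hmono : |monom α x| ≤ (1 + ‖x‖) ^ (∑ i, α i) := by
    rw [monom, Finset.abs_prod, ← Finset.prod_pow_eq_pow_sum]
    apply Finset.prod_le_prod (fun i _ => abs_nonneg _)
    intro i _
    rw [abs_pow]
    apply pow_le_pow_left₀ (abs_nonneg _)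
    calc |x i| ≤ ‖x‖ := by
          rw [← Real.norm_eq_abs]
          exact norm_le_pi_norm x i
      _ ≤ 1 + ‖x‖ := by linarith
  calc |monom α x| * ‖pdm β (u ε) x‖ ≤ (1 + ‖x‖) ^ (∑ i, α i) * ‖pdm β (u ε) x‖ :=
      mul_le_mul_of_nonneg_right hmono (norm_nonneg _)
    _ ≤ C * ε ^ q := hP ε hε0 hεη x

/-- an S-moderate net such that, for some fixed `N`,
`sup_x (1+|x|)^{-N} |u_ε(x)| = O(ε^q)` for every `q`, is S-negligible. -/
theorem stmt13 {n : ℕ} (u : ℝ → (Fin n → ℝ) → ℂ)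
    (hsmooth : ∀ ε ∈ Set.Ioc (0 : ℝ) 1, ContDiff ℝ (⊤ : ℕ∞) (u ε))
    (hmod : SMod u)
    (hdec : ∃ N : ℕ, ∀ q : ℕ, ∃ C : ℝ, EvSmall fun ε => ∀ x,
      ((1 + ‖x‖) ^ N)⁻¹ * ‖u ε x‖ ≤ C * ε ^ q) :
    SNeg u := stmt13' u hsmooth hmod hdec
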